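/- arXiv:0903.1433 — 2 statements merged into one kernel-verified Lean document; each statement's English description precedes it below -/
import Mathlib

section
/- Let A > 0 and let h : [0,A] → ℝ be a bounded integrable function that is continuous at 0. Then lim_{ε→0⁺} ε ∫₀^A t^{ε−1} h(t) dt = h(0). -/
open MeasureTheory Filter Set
open scoped ComplexOrder

noncomputable section

/-- ℝⁿ with the Euclidean inner product. -/
abbrev Euc (n : ℕ) := EuclideanSpace ℝ (Fin n)

/-- `N` is the Minkowski functional of an origin-symmetric star body in ℝⁿ:
continuous, positive off the origin, even, and positively homogeneous of degree 1. -/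
def IsMinkowskiFunctional {n : ℕ} (N : Euc n → ℝ) : Prop :=
  Continuous N ∧ (∀ x : Euc n, x ≠ 0 → 0 < N x) ∧ (∀ x : Euc n, N (-x) = N x) ∧
    ∀ (t : ℝ) (x : Euc n), 0 ≤ t → N (t • x) = t * N x

/-- `g : ℝⁿ → ℂ` is a positive definite function: every quadratic form
`∑ᵢⱼ cᵢ c̄ⱼ g(xᵢ - xⱼ)` is a nonnegative (real) number. -/
def IsPosDefFn {n : ℕ} (g : Euc n → ℂ) : Prop :=
  ∀ (m : ℕ) (x : Fin m → Euc n) (c : Fin m → ℂ),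
    0 ≤ ∑ i, ∑ j, c i * (starRingEnd ℂ) (c j) * g (x i - x j)

/-- `(ℝⁿ, N)` embeds in L₀: `ln N x = ∫_{S^{n-1}} ln |⟨x,ξ⟩| dμ(ξ) + C` for `x ≠ 0`,
with `μ` a finite Borel measure on the unit sphere. -/
def EmbedsInL0 {n : ℕ} (N : Euc n → ℝ) : Prop :=
  ∃ (μ : Measure (Metric.sphere (0 : Euc n) 1)) (C : ℝ), IsFiniteMeasure μ ∧
    ∀ x : Euc n, x ≠ 0 →
      Real.log (N x) = (∫ ξ, Real.log |(inner ℝ x (ξ : Euc n) : ℝ)| ∂μ) + C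

/-- The Fourier transform `φ̂(x) = ∫ φ(y) e^{-i⟨x,y⟩} dy` of a Schwartz function. -/
def schwartzFT {n : ℕ} (φ : SchwartzMap (Euc n) ℝ) (x : Euc n) : ℂ :=
  ∫ y : Euc n, Complex.exp (-Complex.I * ((inner ℝ x y : ℝ) : ℂ)) * (φ y : ℂ)

/-- `N` is a norm on ℝⁿ. -/
def IsNormOn {n : ℕ} (N : Euc n → ℝ) : Prop :=
  (∀ x : Euc n, N x = 0 ↔ x = 0) ∧ (∀ (a : ℝ) (x : Euc n), N (a • x) = |a| * N x) ∧
    ∀ x y : Euc n, N (x + y) ≤ N x + N y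

/-!
The kernel `ε t^(ε-1)` on `(0, A)` has total mass `A^ε → 1`, so it suffices that
`ε ∫ t^(ε-1) g(t) dt → 0` for `g = h - h 0`. If `|g| < δ` on `(0, r)` and `|g| ≤ M`, then
`|g t| ≤ δ + (M / r) t` on `(0, A)`, and integrating this bound against the kernel gives
`δ A^ε + (M / r) ε A^(ε+1) / (ε+1)`, which tends to `δ` as `ε → 0⁺`.
-/

open Topology

lemma integral_Ioo_zero_rpow {s b : ℝ} (hs : -1 < s) (hb : 0 ≤ b) :
    ∫ t in Ioo 0 b, t ^ s = b ^ (s + 1) / (s + 1) := by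
  rw [← integral_Ioc_eq_integral_Ioo, ← intervalIntegral.integral_of_le hb,
    integral_rpow (Or.inl hs), Real.zero_rpow (by linarith), sub_zero]

lemma integrableOn_Ioo_zero_rpow {s : ℝ} (hs : -1 < s) (b : ℝ) :
    IntegrableOn (fun t : ℝ => t ^ s) (Ioo 0 b) := by
  rcases le_or_gt b 0 with hb | hb
  · simp [Ioo_eq_empty_of_le hb]
  · exact (intervalIntegral.integrableOn_Ioo_rpow_iff hb).2 hs

lemma abs_mul_integral_rpow_sub_one_mul_le {A ε a b : ℝ} {g : ℝ → ℝ} (hA : 0 ≤ A) (hε : 0 < ε)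
    (hg : ∀ t ∈ Ioo 0 A, |g t| ≤ a + b * t) :
    |ε * ∫ t in Ioo 0 A, t ^ (ε - 1) * g t| ≤ a * A ^ ε + b * ε * A ^ (ε + 1) / (ε + 1) := by
  have hbound : ∀ t ∈ Ioo 0 A, ‖t ^ (ε - 1) * g t‖ ≤ a * t ^ (ε - 1) + b * t ^ ε := by
    intro t ht
    have hpow : 0 ≤ t ^ (ε - 1) := Real.rpow_nonneg ht.1.le _
    have hmul : t ^ (ε - 1) * t = t ^ ε := by
      rw [← Real.rpow_add_one ht.1.ne', sub_add_cancel]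
    rw [Real.norm_eq_abs, abs_mul, abs_of_nonneg hpow]
    calc t ^ (ε - 1) * |g t| ≤ t ^ (ε - 1) * (a + b * t) := by gcongr; exact hg t ht
      _ = a * t ^ (ε - 1) + b * t ^ ε := by rw [← hmul]; ring
  have hpow₁ := (integrableOn_Ioo_zero_rpow (s := ε - 1) (by linarith) A).const_mul a
  have hpow₂ := (integrableOn_Ioo_zero_rpow (s := ε) (by linarith) A).const_mul b
  have hle := norm_integral_le_of_norm_le (g := fun t => a * t ^ (ε - 1) + b * t ^ ε)
    (hpow₁.add hpow₂)
    ((ae_restrict_iff' measurableSet_Ioo).2 (Eventually.of_forall hbound))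
  rw [integral_add hpow₁ hpow₂, integral_const_mul, integral_const_mul,
    integral_Ioo_zero_rpow (by linarith) hA, integral_Ioo_zero_rpow (by linarith) hA,
    sub_add_cancel, Real.norm_eq_abs] at hle
  rw [abs_mul, abs_of_pos hε]
  calc ε * |∫ t in Ioo 0 A, t ^ (ε - 1) * g t|
      ≤ ε * (a * (A ^ ε / ε) + b * (A ^ (ε + 1) / (ε + 1))) := by gcongr
    _ = a * A ^ ε + b * ε * A ^ (ε + 1) / (ε + 1) := by field_simp

theorem tendsto_mul_integral_rpow_sub_one_mul_of_tendsto_zero {A M : ℝ} {g : ℝ → ℝ} (hA : 0 < A)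
    (hM : ∀ t ∈ Ioo 0 A, |g t| ≤ M) (hg : Tendsto g (𝓝[>] 0) (𝓝 0)) :
    Tendsto (fun ε => ε * ∫ t in Ioo 0 A, t ^ (ε - 1) * g t) (𝓝[>] 0) (𝓝 0) := by
  rw [Metric.tendsto_nhds]
  intro δ hδ
  obtain ⟨r, hr, hgr⟩ : ∃ r > 0, ∀ t ∈ Ioo 0 r, |g t| < δ / 2 := by
    have := hg.eventually (Metric.ball_mem_nhds 0 (half_pos hδ))
    obtain ⟨r, hr, hsub⟩ := mem_nhdsGT_iff_exists_Ioo_subset.1 this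
    exact ⟨r, hr, fun t ht => by simpa using hsub ht⟩
  -- `g` is small near `0` and bounded by `M ≤ M t / r` beyond `r`.
  have hlin : ∀ t ∈ Ioo 0 A, |g t| ≤ δ / 2 + M / r * t := by
    intro t ht
    have hM0 : 0 ≤ M := (abs_nonneg _).trans (hM t ht)
    rcases lt_or_ge t r with htr | hrt
    · have : 0 ≤ M / r * t := by have := ht.1; positivity
      linarith [hgr t ⟨ht.1, htr⟩]
    · have : M ≤ M / r * t := by
        rw [div_mul_eq_mul_div, le_div_iff₀ hr]; exact mul_le_mul_of_nonneg_left hrt hM0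
      linarith [hM t ht]
  have hcont : ContinuousAt
      (fun ε : ℝ => δ / 2 * A ^ ε + M / r * ε * A ^ (ε + 1) / (ε + 1)) 0 := by
    fun_prop (disch := first | exact hA.ne' | norm_num)
  have hlim : ∀ᶠ ε in 𝓝[>] 0, δ / 2 * A ^ ε + M / r * ε * A ^ (ε + 1) / (ε + 1) < δ :=
    (hcont.tendsto.mono_left nhdsWithin_le_nhds).eventually
      (gt_mem_nhds (by simpa using half_lt_self hδ))
  filter_upwards [hlim, self_mem_nhdsWithin] with ε hεδ hε
  rw [Real.dist_eq, sub_zero]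
  exact (abs_mul_integral_rpow_sub_one_mul_le hA.le hε hlin).trans_lt hεδ

lemma mul_integral_rpow_sub_one_mul_eq {A ε : ℝ} {h : ℝ → ℝ} (hA : 0 ≤ A) (hε : 0 < ε)
    (hint : IntegrableOn (fun t => t ^ (ε - 1) * h t) (Ioo 0 A)) (c : ℝ) :
    ε * ∫ t in Ioo 0 A, t ^ (ε - 1) * h t =
      ε * (∫ t in Ioo 0 A, t ^ (ε - 1) * (h t - c)) + c * A ^ ε := by
  have hpow := integrableOn_Ioo_zero_rpow (s := ε - 1) (by linarith) A
  simp_rw [mul_sub]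
  rw [integral_sub hint (hpow.mul_const c), integral_mul_const,
    integral_Ioo_zero_rpow (by linarith) hA, sub_add_cancel]
  field_simp
  ring

/-- Lemma 2: if `h` is bounded and integrable on `[0,A]` and continuous at `0`, then
`ε ∫₀^A t^{ε-1} h(t) dt → h(0)` as `ε → 0⁺`. -/
theorem statement5 (A : ℝ) (hA : 0 < A) (h : ℝ → ℝ)
    (hbd : ∃ M : ℝ, ∀ t ∈ Set.Icc (0 : ℝ) A, |h t| ≤ M)
    (hint : IntegrableOn h (Set.Ioo (0 : ℝ) A))
    (hcont : ContinuousWithinAt h (Set.Ici (0 : ℝ)) 0) :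
    Tendsto (fun ε : ℝ => ε * ∫ t in Set.Ioo (0 : ℝ) A, t ^ (ε - 1) * h t)
      (nhdsWithin (0 : ℝ) (Set.Ioi 0)) (nhds (h 0)) := by
  obtain ⟨M, hM⟩ := hbd
  have hM' : ∀ t ∈ Ioo 0 A, |h t - h 0| ≤ M + |h 0| := fun t ht =>
    (abs_sub _ _).trans (by linarith [hM t (Ioo_subset_Icc_self ht)])
  have hsmall : Tendsto (fun t => h t - h 0) (𝓝[>] 0) (𝓝 0) := by
    simpa using ((hcont.mono Ioi_subset_Ici_self).tendsto.sub_const (h 0))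
  have hpow : Tendsto (fun ε : ℝ => h 0 * A ^ ε) (𝓝[>] 0) (𝓝 (h 0)) := by
    have : ContinuousAt (fun ε : ℝ => h 0 * A ^ ε) 0 := by
      fun_prop (disch := exact hA.ne')
    simpa using this.tendsto.mono_left nhdsWithin_le_nhds
  have hsum := (tendsto_mul_integral_rpow_sub_one_mul_of_tendsto_zero hA hM' hsmall).add hpow
  rw [zero_add] at hsum
  refine hsum.congr' ?_
  filter_upwards [self_mem_nhdsWithin] with ε hε
  have hint_mul : IntegrableOn (fun t => t ^ (ε - 1) * h t) (Ioo 0 A) := by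
    refine (integrableOn_Ioo_zero_rpow (by linarith [hε.out]) A).mul_bdd (c := M)
      hint.aestronglyMeasurable ((ae_restrict_iff' measurableSet_Ioo).2 (Eventually.of_forall ?_))
    exact fun t ht => hM t (Ioo_subset_Icc_self ht)
  exact (mul_integral_rpow_sub_one_mul_eq hA.le hε hint_mul (h 0)).symm
end
end

section
/- Let n ≥ 2, let ‖·‖ be the Minkowski functional of an origin-symmetric star body in ℝⁿ, let μ be a Borel probability measure on ℝⁿ, and let f : ℝ → ℝ be an even continuous function with f(0) = 1 such that f(‖a‖) = ∫_{ℝⁿ} e^{i⟨a,x⟩} dμ(x) for all a ∈ ℝⁿ. Define ψ(ε) := ε ∫_{1/ε}^∞ t^{−1−ε} f(t) dt for ε ∈ (0,1). If ψ(ε) → 1 as ε → 0⁺, then μ is the Dirac measure at the origin, i.e., μ({0}) = 1 (and consequently f(‖a‖) = 1 for all a). -/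
open MeasureTheory Filter Set
open scoped ComplexOrder

noncomputable section

open Real Topology

/-! For `b` with `N b = 1`, homogeneity gives `f t = ∫ cos (t ⟪b, x⟫) dμ` for `t > 0`, so by Fubini
`ψ(ε) = ∫ ε Φ_ε(⟪b, x⟫) dμ` with `Φ_ε(s) = ∫_{1/ε}^∞ t^{-1-ε} cos (t s) dt`. Always `ε Φ_ε ≤ ε^ε`,
and integrating by parts against `sin (t s) / s` gives `|ε Φ_ε(s)| ≤ 2 ε^{2+ε} / |s|`. Hence
`ε^ε (1 - 2ε²/c) μ{|⟪b, x⟫| ≥ c} ≤ ε^ε - ψ(ε) → 0`, so `⟪b, x⟫ = 0` almost surely for every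
direction `b`, and `μ` is the unit mass at the origin. -/

lemma tendsto_rpow_self_nhdsGT_zero : Tendsto (fun x : ℝ => x ^ x) (𝓝[>] 0) (𝓝 1) := by
  have h : Tendsto (fun x : ℝ => exp (x * log x)) (𝓝[>] 0) (𝓝 1) := by
    simpa [Function.comp_def] using
      ((continuous_exp.comp continuous_mul_log).tendsto 0).mono_left nhdsWithin_le_nhds
  refine h.congr' (eventually_nhdsWithin_of_forall fun x (hx : 0 < x) => ?_)
  simp only [rpow_def_of_pos hx, mul_comm]

lemma mul_integral_Ioi_inv_rpow_neg_one_sub {ε : ℝ} (hε : 0 < ε) :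
    ε * ∫ t in Ioi (1 / ε), t ^ (-1 - ε) = ε ^ ε := by
  rw [integral_Ioi_rpow_of_lt (by linarith) (by positivity), show -1 - ε + 1 = -ε by ring,
    one_div, inv_rpow hε.le, ← rpow_neg hε.le, neg_neg]
  field_simp

lemma integrableOn_Ioi_rpow_mul_of_abs_le_one {p c : ℝ} {g : ℝ → ℝ} (hp : p < -1) (hc : 0 < c)
    (hg : Continuous g) (hg1 : ∀ t, |g t| ≤ 1) :
    IntegrableOn (fun t => t ^ p * g t) (Ioi c) :=
  (integrableOn_Ioi_rpow_of_lt hp hc).mul_bdd hg.aestronglyMeasurable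
    (ae_of_all _ fun t => (Real.norm_eq_abs _).trans_le (hg1 t))

lemma integral_Ioi_rpow_mul_cos_le {p c : ℝ} (hp : p < -1) (hc : 0 < c) (s : ℝ) :
    ∫ t in Ioi c, t ^ p * cos (t * s) ≤ ∫ t in Ioi c, t ^ p := by
  refine setIntegral_mono_on
    (integrableOn_Ioi_rpow_mul_of_abs_le_one hp hc (by fun_prop) fun t => abs_cos_le_one _)
    (integrableOn_Ioi_rpow_of_lt hp hc) measurableSet_Ioi fun t ht => ?_
  exact mul_le_of_le_one_right (rpow_nonneg (hc.trans ht).le _) (cos_le_one _)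

lemma abs_integral_Ioi_rpow_mul_cos_le {p c s : ℝ} (hp : p < -1) (hc : 0 < c) (hs : s ≠ 0) :
    |∫ t in Ioi c, t ^ p * cos (t * s)| ≤ 2 * c ^ p / |s| := by
  have hsin : ∀ t, |sin (t * s) / s| ≤ 1 / |s| := fun t => by
    rw [abs_div]; gcongr; exact abs_sin_le_one _
  have hu : ∀ t ∈ Ioi c, HasDerivAt (fun t => t ^ p) (p * t ^ (p - 1)) t := fun t ht =>
    hasDerivAt_rpow_const (Or.inl (hc.trans ht).ne')
  have hv : ∀ t ∈ Ioi c, HasDerivAt (fun t => sin (t * s) / s) (cos (t * s)) t := fun t _ => by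
    simpa [mul_div_assoc, hs] using (((hasDerivAt_id t).mul_const s).sin).div_const s
  have huv' := integrableOn_Ioi_rpow_mul_of_abs_le_one hp hc (g := fun t => cos (t * s))
    (by fun_prop) fun t => abs_cos_le_one _
  have hu'v : IntegrableOn (fun t => p * t ^ (p - 1) * (sin (t * s) / s)) (Ioi c) := by
    have := (integrableOn_Ioi_rpow_of_lt (a := p - 1) (by linarith) hc).mul_bdd
      (c := 1 / |s|) (g := fun t => sin (t * s) / s) (by fun_prop)
      (ae_of_all _ fun t => (Real.norm_eq_abs _).trans_le (hsin t))
    simpa only [IntegrableOn, mul_assoc] using this.const_mul p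
  have h_zero : Tendsto (fun t => t ^ p * (sin (t * s) / s)) (𝓝[>] c)
      (𝓝 (c ^ p * (sin (c * s) / s))) :=
    ((continuousAt_id.rpow_const (Or.inl hc.ne')).mul (by fun_prop)).tendsto.mono_left
      nhdsWithin_le_nhds
  have h_infty : Tendsto (fun t => t ^ p * (sin (t * s) / s)) atTop (𝓝 0) := by
    have hlim : Tendsto (fun t : ℝ => t ^ p / |s|) atTop (𝓝 0) := by
      simpa using (tendsto_rpow_neg_atTop (y := -p) (by linarith)).div_const |s|
    refine squeeze_zero_norm' ?_ hlim
    filter_upwards [eventually_gt_atTop 0] with t ht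
    rw [norm_mul, Real.norm_eq_abs, Real.norm_eq_abs, abs_of_nonneg (rpow_nonneg ht.le _)]
    exact (mul_le_mul_of_nonneg_left (hsin t) (rpow_nonneg ht.le _)).trans_eq (mul_one_div _ _)
  have h_boundary : |c ^ p * (sin (c * s) / s)| ≤ c ^ p / |s| := by
    rw [abs_mul, abs_of_nonneg (rpow_nonneg hc.le _)]
    exact (mul_le_mul_of_nonneg_left (hsin c) (rpow_nonneg hc.le _)).trans_eq (mul_one_div _ _)
  have h_remainder : |∫ t in Ioi c, p * t ^ (p - 1) * (sin (t * s) / s)| ≤ c ^ p / |s| := by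
    have hint : IntegrableOn (fun t => -p * t ^ (p - 1) / |s|) (Ioi c) :=
      ((integrableOn_Ioi_rpow_of_lt (by linarith) hc).const_mul (-p)).div_const _
    calc |∫ t in Ioi c, p * t ^ (p - 1) * (sin (t * s) / s)|
        ≤ ∫ t in Ioi c, -p * t ^ (p - 1) / |s| := by
          rw [← Real.norm_eq_abs]
          refine norm_integral_le_of_norm_le hint
            ((ae_restrict_iff' measurableSet_Ioi).2 (ae_of_all _ fun t ht => ?_))
          have ht0 : 0 ≤ t ^ (p - 1) := rpow_nonneg (hc.trans ht).le _
          rw [Real.norm_eq_abs, abs_mul, abs_mul, abs_of_neg (by linarith : p < 0),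
            abs_of_nonneg ht0]
          exact (mul_le_mul_of_nonneg_left (hsin t) (by nlinarith)).trans_eq (mul_one_div _ _)
      _ = c ^ p / |s| := by
          rw [integral_div, integral_const_mul, integral_Ioi_rpow_of_lt (by linarith) hc,
            sub_add_cancel]
          field_simp [(by linarith : p ≠ 0)]
  rw [integral_Ioi_mul_deriv_eq_deriv_mul hu hv huv' hu'v h_zero h_infty]
  calc _ ≤ |c ^ p * (sin (c * s) / s)|
        + |∫ t in Ioi c, p * t ^ (p - 1) * (sin (t * s) / s)| := by
        rw [zero_sub, sub_eq_add_neg, ← neg_add, abs_neg]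
        exact abs_add_le _ _
    _ ≤ c ^ p / |s| + c ^ p / |s| := add_le_add h_boundary h_remainder
    _ = 2 * c ^ p / |s| := by ring

section CosineTransform

variable {X : Type*} [MeasurableSpace X] {μ : Measure X} {S : X → ℝ}

lemma integrable_rpow_mul_cos_prod [IsFiniteMeasure μ] (hS : Measurable S) {p c : ℝ}
    (hp : p < -1) (hc : 0 < c) :
    Integrable (fun z : ℝ × X => z.1 ^ p * cos (z.1 * S z.2))
      ((volume.restrict (Ioi c)).prod μ) := by
  have h := (integrableOn_Ioi_rpow_of_lt hp hc).mul_prod (integrable_const (1 : ℝ) (μ := μ))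
  simp only [mul_one] at h
  exact h.mul_bdd (by fun_prop) (ae_of_all _ fun z => by simpa using abs_cos_le_one _)

lemma rpow_mul_one_sub_mul_measureReal_le [IsProbabilityMeasure μ] (hS : Measurable S)
    {g : ℝ → ℝ} (hg : ∀ t, 0 < t → g t = ∫ x, cos (t * S x) ∂μ) {ε c : ℝ}
    (hε : 0 < ε) (hc : 0 < c) :
    ε ^ ε * (1 - 2 * ε ^ 2 / c) * μ.real {x | c ≤ |S x|}
      ≤ ε ^ ε - ε * ∫ t in Ioi (1 / ε), t ^ (-1 - ε) * g t := by
  have hp : -1 - ε < -1 := by linarith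
  have hε' : 0 < 1 / ε := by positivity
  set Φ : X → ℝ := fun x => ε * ∫ t in Ioi (1 / ε), t ^ (-1 - ε) * cos (t * S x)
  have hint := integrable_rpow_mul_cos_prod (μ := μ) hS hp hε'
  have hswap : ε * ∫ t in Ioi (1 / ε), t ^ (-1 - ε) * g t = ∫ x, Φ x ∂μ := by
    rw [integral_const_mul, setIntegral_congr_fun measurableSet_Ioi
      fun t ht => by rw [hg t (hε'.trans ht), ← integral_const_mul]]
    exact congrArg _ (integral_integral_swap hint)
  have hΦint : Integrable Φ μ := hint.integral_prod_right.const_mul ε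
  have hΦ_le : ∀ x, Φ x ≤ ε ^ ε := fun x => by
    rw [← mul_integral_Ioi_inv_rpow_neg_one_sub hε]
    exact mul_le_mul_of_nonneg_left (integral_Ioi_rpow_mul_cos_le hp hε' _) hε.le
  have hΦ_small : ∀ x ∈ {x | c ≤ |S x|}, Φ x ≤ ε ^ ε * (2 * ε ^ 2 / c) := fun x hx => by
    have hSx : S x ≠ 0 := fun h => by simp [h] at hx; linarith
    have hpow : ε * (1 / ε) ^ (-1 - ε) = ε ^ ε * ε ^ 2 := by
      rw [one_div, inv_rpow hε.le, ← rpow_neg hε.le, show -(-1 - ε) = 1 + ε by ring,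
        rpow_add hε, rpow_one]
      ring
    calc Φ x ≤ ε * |∫ t in Ioi (1 / ε), t ^ (-1 - ε) * cos (t * S x)| :=
          mul_le_mul_of_nonneg_left (le_abs_self _) hε.le
      _ ≤ ε * (2 * (1 / ε) ^ (-1 - ε) / c) := by
          gcongr
          exact (abs_integral_Ioi_rpow_mul_cos_le hp hε' hSx).trans (by gcongr; exact hx)
      _ = ε ^ ε * (2 * ε ^ 2 / c) := by rw [mul_div_assoc', mul_left_comm, hpow]; ring
  have hμA : μ.real {x | c ≤ |S x|} • (ε ^ ε * (1 - 2 * ε ^ 2 / c))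
      ≤ ∫ x in {x | c ≤ |S x|}, (ε ^ ε - Φ x) ∂μ :=
    setIntegral_ge_of_const_le (measurableSet_le measurable_const hS.abs) (measure_ne_top _ _)
      (fun x hx => by have := hΦ_small x hx; linarith)
      ((integrable_const _).sub hΦint).integrableOn
  calc ε ^ ε * (1 - 2 * ε ^ 2 / c) * μ.real {x | c ≤ |S x|}
      ≤ ∫ x in {x | c ≤ |S x|}, (ε ^ ε - Φ x) ∂μ := by rwa [smul_eq_mul, mul_comm] at hμA
    _ ≤ ∫ x, (ε ^ ε - Φ x) ∂μ :=
        setIntegral_le_integral ((integrable_const _).sub hΦint)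
          (ae_of_all _ fun x => sub_nonneg.2 (hΦ_le x))
    _ = ε ^ ε - ε * ∫ t in Ioi (1 / ε), t ^ (-1 - ε) * g t := by
        rw [integral_sub (integrable_const _) hΦint, hswap, integral_const, probReal_univ,
          one_smul]

lemma measure_le_abs_eq_zero_of_tendsto [IsProbabilityMeasure μ] (hS : Measurable S)
    {g : ℝ → ℝ} (hg : ∀ t, 0 < t → g t = ∫ x, cos (t * S x) ∂μ)
    (hψ : Tendsto (fun ε : ℝ => ε * ∫ t in Ioi (1 / ε), t ^ (-1 - ε) * g t) (𝓝[>] 0) (𝓝 1))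
    {c : ℝ} (hc : 0 < c) : μ {x | c ≤ |S x|} = 0 := by
  have hlower : Tendsto (fun ε : ℝ => ε ^ ε * (1 - 2 * ε ^ 2 / c) * μ.real {x | c ≤ |S x|})
      (𝓝[>] 0) (𝓝 (1 * (1 - 2 * 0 ^ 2 / c) * μ.real {x | c ≤ |S x|})) :=
    ((tendsto_rpow_self_nhdsGT_zero.mul (tendsto_const_nhds.sub
      (((continuous_pow 2).tendsto 0).mono_left nhdsWithin_le_nhds |>.const_mul 2 |>.div_const c)))
      ).mul_const _
  have hupper := tendsto_rpow_self_nhdsGT_zero.sub hψ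
  simp only [zero_pow two_ne_zero, mul_zero, zero_div, sub_zero, one_mul, sub_self]
    at hlower hupper
  have hle : μ.real {x | c ≤ |S x|} ≤ 0 := le_of_tendsto_of_tendsto hlower hupper
    (eventually_nhdsWithin_of_forall fun ε hε => rpow_mul_one_sub_mul_measureReal_le hS hg hε hc)
  exact (measureReal_eq_zero_iff).1 (le_antisymm hle measureReal_nonneg)

lemma ae_eq_zero_of_tendsto [IsProbabilityMeasure μ] (hS : Measurable S)
    {g : ℝ → ℝ} (hg : ∀ t, 0 < t → g t = ∫ x, cos (t * S x) ∂μ)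
    (hψ : Tendsto (fun ε : ℝ => ε * ∫ t in Ioi (1 / ε), t ^ (-1 - ε) * g t) (𝓝[>] 0) (𝓝 1)) :
    ∀ᵐ x ∂μ, S x = 0 := by
  have hsub : {x | S x ≠ 0} ⊆ ⋃ k : ℕ, {x | 1 / (k + 1 : ℝ) ≤ |S x|} := fun x hx => by
    obtain ⟨k, hk⟩ := exists_nat_one_div_lt (abs_pos.2 hx)
    exact mem_iUnion.2 ⟨k, hk.le⟩
  exact measure_mono_null hsub (measure_iUnion_null fun k =>
    measure_le_abs_eq_zero_of_tendsto hS hg hψ Nat.one_div_pos_of_nat)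

end CosineTransform

lemma re_integral_exp_I_mul_eq_integral_cos {X : Type*} [MeasurableSpace X] {μ : Measure X}
    [IsFiniteMeasure μ] {g : X → ℝ} (hg : Measurable g) :
    (∫ x, Complex.exp (Complex.I * g x) ∂μ).re = ∫ x, cos (g x) ∂μ := by
  simp_rw [mul_comm Complex.I]
  have h := integral_re (Integrable.of_bound (μ := μ)
    (f := fun x => Complex.exp (g x * Complex.I)) (by fun_prop) 1
    (ae_of_all _ fun x => by rw [Complex.norm_exp_ofReal_mul_I]))
  simp only [RCLike.re_to_complex, Complex.exp_ofReal_mul_I_re] at h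
  exact h.symm

lemma ae_eq_zero_of_forall_ae_inner_eq_zero {E : Type*} [NormedAddCommGroup E]
    [InnerProductSpace ℝ E] [FiniteDimensional ℝ E] [MeasurableSpace E] {μ : Measure E}
    (h : ∀ a : E, ∀ᵐ x ∂μ, inner ℝ a x = 0) : ∀ᵐ x ∂μ, x = 0 := by
  let b := stdOrthonormalBasis ℝ E
  filter_upwards [ae_all_iff.2 fun i => h (b i)] with x hx
  exact InnerProductSpace.ext_inner_left_basis b.toBasis fun i => by simpa using hx i

theorem statement8_general {n : ℕ} (N : Euc n → ℝ)
    (hN : IsMinkowskiFunctional N)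
    (μ : Measure (Euc n)) [IsProbabilityMeasure μ] (f : ℝ → ℝ)
    (hchar : ∀ a : Euc n,
      (f (N a) : ℂ) = ∫ x : Euc n, Complex.exp (Complex.I * ((inner ℝ a x : ℝ) : ℂ)) ∂μ)
    (hψ : Tendsto (fun ε : ℝ => ε * ∫ t in Set.Ioi (1 / ε), t ^ (-1 - ε) * f t)
      (nhdsWithin (0 : ℝ) (Set.Ioi 0)) (nhds 1)) :
    μ {0} = 1 := by
  obtain ⟨-, hNpos, -, hNhom⟩ := hN
  refine (prob_compl_eq_zero_iff (measurableSet_singleton 0)).1 (ae_iff.1 ?_)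
  refine ae_eq_zero_of_forall_ae_inner_eq_zero fun a => ?_
  rcases eq_or_ne a 0 with rfl | ha
  · simp
  have hNa := hNpos a ha
  set b := (N a)⁻¹ • a
  have hNb : N b = 1 := by rw [hNhom _ _ (inv_nonneg.2 hNa.le), inv_mul_cancel₀ hNa.ne']
  have hcos : ∀ t, 0 < t → f t = ∫ x, cos (t * inner ℝ b x) ∂μ := fun t ht => by
    have := congrArg Complex.re (hchar (t • b))
    have hmeas : Measurable fun x => t * inner ℝ b x := by fun_prop
    simpa only [hNhom t b ht.le, hNb, mul_one, Complex.ofReal_re, real_inner_smul_left,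
      re_integral_exp_I_mul_eq_integral_cos hmeas] using this
  filter_upwards [ae_eq_zero_of_tendsto (by fun_prop) hcos hψ] with x hx
  simpa [b, real_inner_smul_left, hNa.ne'] using hx

/-- If `f(N ·)` is the characteristic functional of a probability measure `μ` and
`ψ(ε) = ε ∫_{1/ε}^∞ t^{-1-ε} f(t) dt → 1` as `ε → 0⁺`, then `μ` is the unit atom at
the origin. -/
theorem statement8 {n : ℕ} (hn : 2 ≤ n) (N : Euc n → ℝ)
    (hN : IsMinkowskiFunctional N)
    (μ : Measure (Euc n)) [IsProbabilityMeasure μ] (f : ℝ → ℝ)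
    (hf_even : ∀ t : ℝ, f (-t) = f t) (hf_cont : Continuous f) (hf0 : f 0 = 1)
    (hchar : ∀ a : Euc n,
      (f (N a) : ℂ) = ∫ x : Euc n, Complex.exp (Complex.I * ((inner ℝ a x : ℝ) : ℂ)) ∂μ)
    (hψ : Tendsto (fun ε : ℝ => ε * ∫ t in Set.Ioi (1 / ε), t ^ (-1 - ε) * f t)
      (nhdsWithin (0 : ℝ) (Set.Ioi 0)) (nhds 1)) :
    μ {0} = 1 :=
  statement8_general N hN μ f hchar hψ
end
end
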